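/- There exists a constant D, depending only on ε, κ₀, a, b, L, and ν, such that for every m ∈ ℤ^ν ∖ {0} with |m| ≥ 2, the cardinality of R_m satisfies |R_m| ≤ log₂ log₂ |m| + D. -/
import Mathlib


open scoped Real BigOperators
open Real

noncomputable section

/-- `|m| = ∑_i |m_i|` (ℓ¹ norm on `ℤ^ν`, as a real number). -/
def znorm {ν : ℕ} (m : Fin ν → ℤ) : ℝ := ∑ i, |(m i : ℝ)|

/-- Distance between the gaps labelled `m` and `n`
(equals `dist ([Em m, Ep m], [Em n, Ep n])` when these closed intervals are disjoint). -/
def gapDist {ν : ℕ} (Em Ep : (Fin ν → ℤ) → ℝ) (m n : Fin ν → ℤ) : ℝ :=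
  max (Em n - Ep m) (Em m - Ep n)

/-- Gap length `γ_m = E_m^+ - E_m^-`. -/
def gapLen {ν : ℕ} (Em Ep : (Fin ν → ℤ) → ℝ) (m : Fin ν → ℤ) : ℝ := Ep m - Em m

/-- The exceptional set `R_m = { n ∈ ℤ^ν ∖ {0} : n ≠ m, γ_n > L η_{n,m}⁴ }`. -/
def Rset {ν : ℕ} (Em Ep : (Fin ν → ℤ) → ℝ) (L : ℝ) (m : Fin ν → ℤ) : Set (Fin ν → ℤ) :=
  {n | n ≠ 0 ∧ n ≠ m ∧ L * gapDist Em Ep n m ^ 4 < gapLen Em Ep n}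

/-- `C_m = (η_{m,0} + γ_m)^{1/2} ∏_{n ≠ m} (1 + γ_n/η_{m,n})^{1/2}`, the product running over
all nonzero labels `n ≠ m`. -/
def Cm {ν : ℕ} (Em Ep : (Fin ν → ℤ) → ℝ) (E0 : ℝ) (m : Fin ν → ℤ) : ℝ :=
  Real.sqrt ((Em m - E0) + gapLen Em Ep m) *
    ∏' n : {n : Fin ν → ℤ // n ≠ 0 ∧ n ≠ m},
      Real.sqrt (1 + gapLen Em Ep n / gapDist Em Ep m n)

lemma RL.znorm_nonneg {ν : ℕ} (n : Fin ν → ℤ) : 0 ≤ znorm n :=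
  Finset.sum_nonneg fun i _ => abs_nonneg _

lemma RL.one_le_znorm {ν : ℕ} {n : Fin ν → ℤ} (hn : n ≠ 0) : 1 ≤ znorm n := by
  obtain ⟨i, hi⟩ := Function.ne_iff.mp hn
  have h1 : (1 : ℝ) ≤ |(n i : ℝ)| := by
    have : n i ≠ 0 := by simpa using hi
    rw [← Int.cast_abs]
    exact_mod_cast Int.one_le_abs (by simpa using this)
  calc (1:ℝ) ≤ |(n i : ℝ)| := h1
    _ ≤ znorm n := Finset.single_le_sum (f := fun j => |(n j : ℝ)|)
        (fun j _ => abs_nonneg _) (Finset.mem_univ i)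

lemma RL.gapDist_comm {ν : ℕ} (Em Ep : (Fin ν → ℤ) → ℝ) (m n : Fin ν → ℤ) :
    gapDist Em Ep m n = gapDist Em Ep n m := max_comm _ _

lemma RL.gapDist_triangle {ν : ℕ} (Em Ep : (Fin ν → ℤ) → ℝ) (m n n' : Fin ν → ℤ) :
    gapDist Em Ep n' n ≤ gapDist Em Ep n' m + gapLen Em Ep m + gapDist Em Ep n m := by
  unfold gapDist gapLen
  apply max_le
  · have h1 : Em n - Ep m ≤ max (Em m - Ep n) (Em n - Ep m) := le_max_right _ _
    have h2 : Em m - Ep n' ≤ max (Em m - Ep n') (Em n' - Ep m) := le_max_left _ _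
    linarith
  · have h1 : Em m - Ep n ≤ max (Em m - Ep n) (Em n - Ep m) := le_max_left _ _
    have h2 : Em n' - Ep m ≤ max (Em m - Ep n') (Em n' - Ep m) := le_max_right _ _
    linarith

lemma RL.cancel {k : ℝ} (h : k ≠ 0) (t : ℝ) : (2/k) * (k * t / 2) = t := by
  field_simp

/-- counting lemma: finite set of reals, all ≥ Bo ≥ 2, pairwise `t < t' → t^2 ≤ t'`, all ≤ M,
nonempty: then Bo^(2^(card-1)) ≤ M. -/
lemma RL.count : ∀ (k : ℕ) (B : Finset ℝ) (Bo M : ℝ), B.card = k → 2 ≤ Bo →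
    (∀ t ∈ B, Bo ≤ t) → (∀ t ∈ B, ∀ t' ∈ B, t < t' → t ^ 2 ≤ t') →
    (∀ t ∈ B, t ≤ M) → B.Nonempty → Bo ^ 2 ^ (B.card - 1) ≤ M := by
  intro k
  induction k with
  | zero =>
    intro B Bo M hcard _ _ _ _ hne
    exact absurd hcard (by simpa [Finset.card_eq_zero] using hne.ne_empty)
  | succ k ih =>
    intro B Bo M hcard hBo hlow hgap hup hne
    set a0 := B.min' hne with ha0
    have ha0B : a0 ∈ B := B.min'_mem hne
    rcases Nat.eq_zero_or_pos k with hk | hk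
    · subst hk
      have h1 : Bo ≤ M := le_trans (hlow a0 ha0B) (hup a0 ha0B)
      simpa [hcard] using h1
    · set B' := B.erase a0 with hB'
      have hc' : B'.card = k := by rw [hB', Finset.card_erase_of_mem ha0B, hcard]; omega
      have hne' : B'.Nonempty := Finset.card_pos.mp (by omega)
      have hlow' : ∀ t ∈ B', Bo ^ 2 ≤ t := by
        intro t ht
        have htB := Finset.mem_of_mem_erase ht
        have hlt : a0 < t :=
          lt_of_le_of_ne (B.min'_le t htB) (Ne.symm (Finset.ne_of_mem_erase ht))
        have := hlow a0 ha0B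
        calc Bo ^ 2 ≤ a0 ^ 2 := by nlinarith
          _ ≤ t := hgap a0 ha0B t htB hlt
      have hres := ih B' (Bo ^ 2) M hc' (by nlinarith)
        hlow'
        (fun t ht t' ht' h => hgap t (Finset.mem_of_mem_erase ht) t' (Finset.mem_of_mem_erase ht') h)
        (fun t ht => hup t (Finset.mem_of_mem_erase ht)) hne'
      rw [hc'] at hres
      rw [hcard]
      have hBo0 : 0 ≤ Bo := by linarith
      calc Bo ^ 2 ^ (k + 1 - 1) = (Bo ^ 2) ^ 2 ^ (k - 1) := by
            rw [← pow_mul]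
            congr 1
            have : k - 1 + 1 = k := by omega
            calc 2 ^ (k+1-1) = 2 ^ (k - 1 + 1) := by rw [this]; rfl
              _ = 2 * 2 ^ (k-1) := by ring
        _ ≤ M := hres

/-- `log₂(A + x) ≤ log₂ A + x + 1` for `A ≥ 1`, `x ≥ 0`. -/
lemma RL.logb_add_le {A x : ℝ} (hA : 1 ≤ A) (hx : 0 ≤ x) :
    Real.logb 2 (A + x) ≤ Real.logb 2 A + x + 1 := by
  have h2 : (1:ℝ) < 2 := one_lt_two
  have key : A + x ≤ A * 2 ^ (x + 1) := by
    have hexp : 1 + x ≤ 2 ^ (x + 1) := by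
      have heq : (2:ℝ) ^ (x+1) = Real.exp ((x+1) * Real.log 2) := by
        rw [Real.rpow_def_of_pos (by norm_num)]; ring_nf
      rw [heq]
      have hlog : (0.6931471803 : ℝ) < Real.log 2 := Real.log_two_gt_d9
      have hh := Real.add_one_le_exp ((x+1) * Real.log 2 / 2)
      have hsq : Real.exp ((x+1) * Real.log 2) = Real.exp ((x+1) * Real.log 2 / 2) ^ 2 := by
        rw [sq, ← Real.exp_add]; ring_nf
      rw [hsq]
      set z := (x+1) * Real.log 2 / 2 with hz
      have hzge : 0.34 * (x+1) ≤ z := by rw [hz]; nlinarith [hlog, hx]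
      have hw : 1 + 0.34*(x+1) ≤ Real.exp z := by linarith
      have hw0 : (0:ℝ) ≤ 1 + 0.34*(x+1) := by linarith
      nlinarith [mul_le_mul hw hw hw0 (le_trans hw0 hw), sq_nonneg x]
    nlinarith [Real.rpow_pos_of_pos (show (0:ℝ) < 2 by norm_num) (x+1)]
  calc Real.logb 2 (A + x) ≤ Real.logb 2 (A * 2 ^ (x+1)) :=
        Real.logb_le_logb_of_le h2 (by linarith) key
    _ = Real.logb 2 A + (x + 1) := by
        rw [Real.logb_mul (by positivity) (by positivity),
          Real.logb_rpow (by norm_num) (by norm_num)]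
    _ = Real.logb 2 A + x + 1 := by ring

/-- exp beats rpow eventually, quantitative version -/
lemma RL.exp_dominates {cc Cq : ℝ} (p : ℝ) (hcc : 0 < cc) (hCq : 0 < Cq) :
    ∃ T : ℝ, 2 ≤ T ∧ ∀ t, T ≤ t → t ^ p ≤ Cq * Real.exp (cc * t) := by
  set N := ⌈p⌉₊ with hN
  set F : ℝ := (Nat.factorial (N+1) : ℝ) with hF
  have hFpos : (0:ℝ) < F := by
    rw [hF]; exact_mod_cast Nat.factorial_pos (N+1)
  refine ⟨max 2 (F / (Cq * cc^(N+1))), le_max_left _ _, ?_⟩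
  intro t ht
  have ht2 : (2:ℝ) ≤ t := le_trans (le_max_left _ _) ht
  have ht1 : (1:ℝ) ≤ t := by linarith
  have ht0 : (0:ℝ) < t := by linarith
  have h1 : t ^ p ≤ t ^ (N : ℕ) := by
    rw [← Real.rpow_natCast t N]
    exact Real.rpow_le_rpow_of_exponent_le ht1 (Nat.le_ceil p)
  refine h1.trans ?_
  have hct : 0 ≤ cc * t := by positivity
  have hterm : (cc*t) ^ (N+1) / F ≤ Real.exp (cc * t) := by
    refine le_trans ?_ (Real.sum_le_exp_of_nonneg hct (N + 2))
    exact Finset.single_le_sum (f := fun i => (cc*t)^i / (Nat.factorial i : ℝ))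
      (fun i _ => by positivity) (Finset.mem_range.mpr (by omega))
  have hfac : F ≤ Cq * cc^(N+1) * t := by
    have hTt : F / (Cq * cc^(N+1)) ≤ t := le_trans (le_max_right _ _) ht
    rw [div_le_iff₀ (by positivity)] at hTt
    linarith [hTt]
  calc t ^ (N:ℕ) = 1 * t ^ N := (one_mul _).symm
    _ ≤ (Cq * cc^(N+1) * t / F) * t ^ N := by
        apply mul_le_mul_of_nonneg_right _ (by positivity)
        rw [le_div_iff₀ hFpos]; linarith
    _ = Cq * ((cc*t)^(N+1) / F) := by rw [mul_pow]; ring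
    _ ≤ Cq * Real.exp (cc * t) := mul_le_mul_of_nonneg_left hterm hCq.le

set_option maxHeartbeats 1000000 in
/-- There is a constant `D` (depending only on `ε, κ₀, a, b, L, ν`) such that
`|R_m| ≤ log₂ log₂ |m| + D` for all `m` with `|m| ≥ 2`. -/
theorem Rset_card_le
    {ν : ℕ} (hν : 0 < ν) (ε κ₀ a b c E0 L : ℝ)
    (hε : 0 < ε) (hκ₀ : 0 < κ₀) (hκ₁ : κ₀ ≤ 1) (ha : 0 < a) (hb : 0 < b) (hc : 0 < c)
    (Em Ep : (Fin ν → ℤ) → ℝ)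
    (hlt : ∀ m : Fin ν → ℤ, m ≠ 0 → Em m < Ep m)
    (hE0 : ∀ m : Fin ν → ℤ, m ≠ 0 → E0 < Em m)
    (hdisj : ∀ m n : Fin ν → ℤ, m ≠ 0 → n ≠ 0 → m ≠ n → Ep m < Em n ∨ Ep n < Em m)
    (Hγ : ∀ m : Fin ν → ℤ, m ≠ 0 →
      gapLen Em Ep m < 2 * ε * Real.exp (-(κ₀ * znorm m) / 2))
    (Hη : ∀ m n : Fin ν → ℤ, m ≠ 0 → n ≠ 0 → m ≠ n → znorm n ≤ znorm m →
      a * znorm m ^ (-b) ≤ gapDist Em Ep m n)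
    (Hη0low : ∀ m : Fin ν → ℤ, m ≠ 0 → a * znorm m ^ (-b) ≤ Em m - E0)
    (Hη0 : ∀ m : Fin ν → ℤ, m ≠ 0 → Em m - E0 ≤ c * znorm m ^ (2 : ℕ))
    (hL : 0 < L)
    (hLbig : ∀ m : Fin ν → ℤ, m ≠ 0 →
      2 * ε * Real.exp (-(κ₀ * znorm m) / 2) < L * a ^ 4 * znorm m ^ (-(4 * b)))
    :
    ∃ D : ℝ, ∀ m : Fin ν → ℤ, m ≠ 0 → 2 ≤ znorm m →
      ((Rset Em Ep L m).ncard : ℝ) ≤ Real.logb 2 (Real.logb 2 (znorm m)) + D := by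
  classical
  have h2ε : (0:ℝ) < 2 * ε := by linarith
  set Q : ℝ := (2*ε/L) ^ ((1:ℝ)/4) with hQdef
  have hQpos : 0 < Q := by positivity
  set K : ℝ := 2*ε + 2*Q with hKdef
  have hKpos : 0 < K := by positivity
  obtain ⟨T₂, hT₂2, hT₂⟩ := RL.exp_dominates (cc := κ₀/8) (Cq := a/K) (2*b)
    (by positivity) (by positivity)
  set z : ℤ := ⌈T₂⌉ with hzdef
  set D₁ : ℕ := (Fintype.piFinset fun _ : Fin ν => Finset.Icc (-z) z).card with hD₁def
  set c₇ : ℝ := max 0 (Real.log (2*ε/(L*a^4))) with hc₇def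
  have hc₇0 : 0 ≤ c₇ := le_max_left _ _
  set C₆ : ℝ := max 2 ((2/κ₀) * (c₇ + 4*b)) with hC₆def
  have hC₆2 : (2:ℝ) ≤ C₆ := le_max_left _ _
  have hA1 : 1 ≤ Real.logb 2 C₆ := by
    have := Real.logb_le_logb_of_le one_lt_two (by norm_num : (0:ℝ) < 2) hC₆2
    rwa [Real.logb_self_eq_one one_lt_two] at this
  refine ⟨(D₁ : ℝ) + Real.logb 2 (Real.logb 2 C₆) + 2, ?_⟩
  intro m hm hm2
  set x := Real.logb 2 (Real.logb 2 (znorm m)) with hxdef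
  have hzm1 : 1 ≤ znorm m := RL.one_le_znorm hm
  have hzm0 : (0:ℝ) < znorm m := by linarith
  have hy1 : 1 ≤ Real.logb 2 (znorm m) := by
    have := Real.logb_le_logb_of_le one_lt_two (by norm_num : (0:ℝ) < 2) hm2
    rwa [Real.logb_self_eq_one one_lt_two] at this
  have hx0 : 0 ≤ x := Real.logb_nonneg one_lt_two hy1
  set y := Real.logb 2 (znorm m) with hydef
  set M : ℝ := C₆ * y with hMdef
  have hM2 : (2:ℝ) ≤ M := by nlinarith
  -- rpow power identity
  have hr4 : ∀ t : ℝ, 0 < t → (a * t ^ (-b)) ^ (4:ℕ) = a^4 * t ^ (-(4*b)) := by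
    intro t ht
    rw [mul_pow]
    congr 1
    rw [← Real.rpow_natCast (t ^ (-b)) 4, ← Real.rpow_mul ht.le]
    norm_num
    congr 1
    ring
  -- Fact A : norms of elements of R are ≤ znorm m
  have hA : ∀ n : Fin ν → ℤ, n ∈ Rset Em Ep L m → znorm n ≤ znorm m := by
    intro n hn
    obtain ⟨hn0, hnm, hmem⟩ := hn
    by_contra hcon
    push_neg at hcon
    have hle : znorm m ≤ znorm n := hcon.le
    have hzn0 : (0:ℝ) < znorm n := by
      have := RL.one_le_znorm hn0; linarith
    have h1 := Hη n m hn0 hm hnm hle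
    have hL0 : (0:ℝ) ≤ a * znorm n ^ (-b) := by positivity
    have h4 : (a * znorm n ^ (-b)) ^ (4:ℕ) ≤ gapDist Em Ep n m ^ (4:ℕ) :=
      pow_le_pow_left₀ hL0 h1 4
    rw [hr4 _ hzn0] at h4
    have h2 := hLbig n hn0
    have h3 := Hγ n hn0
    have h5 : L * (a^4 * znorm n ^ (-(4*b))) ≤ L * gapDist Em Ep n m ^ (4:ℕ) :=
      mul_le_mul_of_nonneg_left h4 hL.le
    linarith
  -- Fact B : distance lower bound
  have hB : ∀ n : Fin ν → ℤ, n ∈ Rset Em Ep L m → a * znorm m ^ (-b) ≤ gapDist Em Ep n m := by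
    intro n hn
    have h := Hη m n hm hn.1 (fun h => hn.2.1 h.symm) (hA n hn)
    rwa [RL.gapDist_comm] at h
  have hBpos : (0:ℝ) < a * znorm m ^ (-b) := by positivity
  -- upper bound on norms: znorm n ≤ M
  have hupM : ∀ n : Fin ν → ℤ, n ∈ Rset Em Ep L m → znorm n ≤ M := by
    intro n hn
    obtain ⟨hn0, hnm, hmem⟩ := hn
    have h4 : (a * znorm m ^ (-b)) ^ (4:ℕ) ≤ gapDist Em Ep n m ^ (4:ℕ) :=
      pow_le_pow_left₀ hBpos.le (hB n ⟨hn0, hnm, hmem⟩) 4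
    rw [hr4 _ hzm0] at h4
    have h5 : L * (a^4 * znorm m ^ (-(4*b))) ≤ L * gapDist Em Ep n m ^ (4:ℕ) :=
      mul_le_mul_of_nonneg_left h4 hL.le
    have h3 := Hγ n hn0
    have step1 : (L * a^4) * znorm m ^ (-(4*b)) < (2*ε) * Real.exp (-(κ₀ * znorm n)/2) := by
      have := hmem; linarith
    have hP0 : (0:ℝ) < (L * a^4) * znorm m ^ (-(4*b)) := by positivity
    have hlt := Real.log_lt_log hP0 step1
    rw [Real.log_mul (by positivity) (by positivity),
      Real.log_mul (by positivity) (Real.exp_ne_zero _),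
      Real.log_rpow hzm0, Real.log_exp] at hlt
    -- hlt : log (L*a^4) + (-(4*b)) * log (znorm m) < log (2*ε) + (-(κ₀ * znorm n)/2)
    have hdiv : Real.log (2*ε/(L*a^4)) = Real.log (2*ε) - Real.log (L*a^4) :=
      Real.log_div (by positivity) (by positivity)
    have step2 : κ₀ * znorm n / 2 < c₇ + 4*b * Real.log (znorm m) := by
      have hle : Real.log (2*ε/(L*a^4)) ≤ c₇ := le_max_right _ _
      rw [hdiv] at hle
      linarith
    have hlog2pos : (0:ℝ) < Real.log 2 := Real.log_pos one_lt_two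
    have hlog2lt1 : Real.log 2 < 1 := by
      have := Real.log_two_lt_d9; linarith
    have hy' : y * Real.log 2 = Real.log (znorm m) := by
      rw [hydef, Real.logb, div_mul_cancel₀ _ hlog2pos.ne']
    have h5' : κ₀ * znorm n / 2 ≤ (c₇ + 4*b) * y := by
      have e1 : 0 ≤ c₇ * (y - 1) := mul_nonneg hc₇0 (by linarith)
      have e2 : 0 ≤ (4*b) * y * (1 - Real.log 2) :=
        mul_nonneg (mul_nonneg (by linarith) (by linarith)) (by linarith)
      nlinarith [step2, hy']
    have h6 := mul_le_mul_of_nonneg_left h5' (show (0:ℝ) ≤ 2/κ₀ by positivity)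
    rw [RL.cancel hκ₀.ne' (znorm n)] at h6
    have h7 : (2/κ₀) * ((c₇ + 4*b) * y) ≤ C₆ * y := by
      have : (2/κ₀) * ((c₇ + 4*b) * y) = ((2/κ₀) * (c₇ + 4*b)) * y := by ring
      rw [this]
      exact mul_le_mul_of_nonneg_right (le_max_right _ _) (by linarith)
    calc znorm n ≤ (2/κ₀) * ((c₇ + 4*b) * y) := h6
      _ ≤ C₆ * y := h7
  -- Fact D : distance upper bound
  have hD : ∀ n : Fin ν → ℤ, n ∈ Rset Em Ep L m →
      gapDist Em Ep n m ≤ Q * Real.exp (-(κ₀ * znorm n)/8) := by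
    intro n hn
    obtain ⟨hn0, hnm, hmem⟩ := hn
    have hg0 : (0:ℝ) ≤ gapDist Em Ep n m := le_trans hBpos.le (hB n ⟨hn0, hnm, hmem⟩)
    have hE0' : (0:ℝ) < Real.exp (-(κ₀ * znorm n)/8) := Real.exp_pos _
    rw [← pow_le_pow_iff_left₀ hg0 (by positivity) (show (4:ℕ) ≠ 0 by norm_num)]
    have hrhs : (Q * Real.exp (-(κ₀ * znorm n)/8)) ^ (4:ℕ)
        = (2*ε/L) * Real.exp (-(κ₀ * znorm n)/2) := by
      rw [mul_pow]
      congr 1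
      · rw [hQdef, ← Real.rpow_natCast ((2*ε/L) ^ ((1:ℝ)/4)) 4, ← Real.rpow_mul (by positivity)]
        norm_num
      · rw [← Real.exp_nat_mul]
        congr 1
        ring
    rw [hrhs, div_mul_eq_mul_div, le_div_iff₀ hL]
    have h3 := Hγ n hn0
    nlinarith [hmem, h3]
  -- pair estimate
  have hpair : ∀ n n' : Fin ν → ℤ, n ∈ Rset Em Ep L m → n' ∈ Rset Em Ep L m → n ≠ n' →
      znorm n ≤ znorm n' → (a/K) * Real.exp (κ₀/8 * znorm n) ≤ znorm n' ^ b := by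
    intro n n' hn hn' hne hle
    have hzn'1 : 1 ≤ znorm n' := RL.one_le_znorm hn'.1
    have hzn'0 : (0:ℝ) < znorm n' := by linarith
    have hzn1 : 1 ≤ znorm n := RL.one_le_znorm hn.1
    have h1 := Hη n' n hn'.1 hn.1 (fun h => hne h.symm) hle
    have h2 := RL.gapDist_triangle Em Ep m n n'
    have h3 := hD n' hn'
    have h4 := hD n hn
    have h5 := Hγ m hm
    have hmono1 : Real.exp (-(κ₀ * znorm n')/8) ≤ Real.exp (-(κ₀ * znorm n)/8) :=
      Real.exp_le_exp.mpr (by nlinarith [mul_nonneg hκ₀.le (sub_nonneg.mpr hle)])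
    have hmono2 : Real.exp (-(κ₀ * znorm m)/2) ≤ Real.exp (-(κ₀ * znorm n)/8) := by
      apply Real.exp_le_exp.mpr
      have hnm' := hA n hn
      nlinarith [mul_nonneg hκ₀.le (show (0:ℝ) ≤ 4*znorm m - znorm n by linarith)]
    have h6 : a * znorm n' ^ (-b) ≤ K * Real.exp (-(κ₀ * znorm n)/8) := by
      have e3 : gapDist Em Ep n' m ≤ Q * Real.exp (-(κ₀*znorm n)/8) :=
        le_trans h3 (mul_le_mul_of_nonneg_left hmono1 hQpos.le)
      have e5 : gapLen Em Ep m ≤ 2*ε*Real.exp (-(κ₀*znorm n)/8) :=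
        le_trans h5.le (mul_le_mul_of_nonneg_left hmono2 h2ε.le)
      calc a * znorm n' ^ (-b) ≤ gapDist Em Ep n' n := h1
        _ ≤ gapDist Em Ep n' m + gapLen Em Ep m + gapDist Em Ep n m := h2
        _ ≤ Q * Real.exp (-(κ₀*znorm n)/8) + 2*ε*Real.exp (-(κ₀*znorm n)/8)
            + Q * Real.exp (-(κ₀*znorm n)/8) := add_le_add (add_le_add e3 e5) h4
        _ = K * Real.exp (-(κ₀ * znorm n)/8) := by rw [hKdef]; ring
    have hEpos : (0:ℝ) < Real.exp (κ₀/8 * znorm n) := Real.exp_pos _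
    have hPpos : (0:ℝ) < znorm n' ^ b := Real.rpow_pos_of_pos hzn'0 b
    have hinv : Real.exp (-(κ₀ * znorm n)/8) = (Real.exp (κ₀/8 * znorm n))⁻¹ := by
      rw [← Real.exp_neg]; congr 1; ring
    have hrpowneg : znorm n' ^ (-b) = (znorm n' ^ b)⁻¹ := Real.rpow_neg hzn'0.le b
    rw [hinv, hrpowneg] at h6
    have h7 := mul_le_mul_of_nonneg_right h6 (mul_pos hPpos hEpos).le
    have e1 : a * (znorm n' ^ b)⁻¹ * (znorm n' ^ b * Real.exp (κ₀/8 * znorm n))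
        = a * Real.exp (κ₀/8 * znorm n) := by
      field_simp
    have e2 : K * (Real.exp (κ₀/8 * znorm n))⁻¹ * (znorm n' ^ b * Real.exp (κ₀/8 * znorm n))
        = K * znorm n' ^ b := by
      field_simp
    rw [e1, e2] at h7
    rw [div_mul_eq_mul_div, div_le_iff₀ hKpos]
    linarith [h7]
  -- squaring gap between consecutive large norms
  have hsq : ∀ n n' : Fin ν → ℤ, n ∈ Rset Em Ep L m → n' ∈ Rset Em Ep L m →
      T₂ ≤ znorm n → znorm n < znorm n' → znorm n ^ (2:ℕ) ≤ znorm n' := by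
    intro n n' hn hn' hT hlt'
    have hne : n ≠ n' := by
      intro h; rw [h] at hlt'; exact lt_irrefl _ hlt'
    have hp := hpair n n' hn hn' hne hlt'.le
    have hth := hT₂ (znorm n) hT
    have h1 : znorm n ^ (2*b) ≤ znorm n' ^ b := le_trans hth hp
    have hzn0 : (0:ℝ) < znorm n := lt_of_lt_of_le (by linarith) hT
    have e : (znorm n ^ (2:ℕ)) ^ b = znorm n ^ (2*b) := by
      rw [← Real.rpow_natCast (znorm n) 2, ← Real.rpow_mul hzn0.le]
      norm_num
    have h2 : (znorm n ^ (2:ℕ)) ^ b ≤ znorm n' ^ b := by rw [e]; exact h1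
    exact (Real.rpow_le_rpow_iff (by positivity) (RL.znorm_nonneg n') hb).mp h2
  -- injectivity of znorm on large-norm elements
  have hinj : ∀ n n' : Fin ν → ℤ, n ∈ Rset Em Ep L m → n' ∈ Rset Em Ep L m →
      T₂ ≤ znorm n → znorm n = znorm n' → n = n' := by
    intro n n' hn hn' hT heq
    by_contra hne
    have hp := hpair n n' hn hn' hne heq.le
    have hth := hT₂ (znorm n) hT
    rw [← heq] at hp
    have h1 : znorm n ^ (2*b) ≤ znorm n ^ b := le_trans hth hp
    have h2 : (1:ℝ) < znorm n := by linarith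
    have h3 : znorm n ^ b < znorm n ^ (2*b) :=
      Real.rpow_lt_rpow_of_exponent_lt h2 (by linarith)
    linarith
  -- finiteness
  set zM : ℤ := ⌈M⌉ with hzMdef
  have habs : ∀ (n : Fin ν → ℤ) (i : Fin ν), |(n i : ℝ)| ≤ znorm n := by
    intro n i
    exact Finset.single_le_sum (f := fun j => |(n j : ℝ)|)
      (fun j _ => abs_nonneg _) (Finset.mem_univ i)
  have hfin : (Rset Em Ep L m).Finite := by
    apply Set.Finite.subset
      (Finset.finite_toSet (Fintype.piFinset fun _ : Fin ν => Finset.Icc (-zM) zM))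
    intro n hn
    simp only [Finset.coe_sort_coe, Finset.mem_coe, Fintype.mem_piFinset, Finset.mem_Icc]
    intro i
    have h2 : |(n i : ℝ)| ≤ (zM : ℝ) :=
      le_trans (habs n i) (le_trans (hupM n hn) (Int.le_ceil M))
    rw [abs_le] at h2
    constructor
    · have := h2.1; exact_mod_cast (by push_cast; linarith : ((-zM : ℤ) : ℝ) ≤ (n i : ℝ))
    · exact_mod_cast h2.2
  set F := hfin.toFinset with hFdef
  have hcardF : (Rset Em Ep L m).ncard = F.card := Set.ncard_eq_toFinset_card _ hfin
  have hmemF : ∀ n, n ∈ F ↔ n ∈ Rset Em Ep L m := fun n => hfin.mem_toFinset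
  set G := F.filter (fun n => T₂ ≤ znorm n) with hGdef
  set Fs := F.filter (fun n => ¬ T₂ ≤ znorm n) with hFsdef
  have hsplit : G.card + Fs.card = F.card :=
    Finset.card_filter_add_card_filter_not (p := fun n => T₂ ≤ znorm n)
  have hsmall : Fs.card ≤ D₁ := by
    rw [hD₁def]
    apply Finset.card_le_card
    intro n hn
    rw [hFsdef, Finset.mem_filter] at hn
    obtain ⟨hnF, hnT⟩ := hn
    push_neg at hnT
    rw [Fintype.mem_piFinset]
    intro i
    rw [Finset.mem_Icc]
    have h2 : |(n i : ℝ)| ≤ (z : ℝ) :=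
      le_trans (habs n i) (le_trans hnT.le (Int.le_ceil T₂))
    rw [abs_le] at h2
    constructor
    · have := h2.1; exact_mod_cast (by push_cast; linarith : ((-z : ℤ) : ℝ) ≤ (n i : ℝ))
    · exact_mod_cast h2.2
  have hmemG : ∀ n, n ∈ G → n ∈ Rset Em Ep L m ∧ T₂ ≤ znorm n := by
    intro n hn
    rw [hGdef, Finset.mem_filter] at hn
    exact ⟨(hmemF n).mp hn.1, hn.2⟩
  set B := G.image znorm with hBdef
  have hGB : B.card = G.card := by
    rw [hBdef]
    apply Finset.card_image_of_injOn
    intro n hn n' hn' heq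
    exact hinj n n' (hmemG n hn).1 (hmemG n' hn').1 (hmemG n hn).2 heq
  have hlogC₆0 : 0 ≤ Real.logb 2 (Real.logb 2 C₆) := Real.logb_nonneg one_lt_two hA1
  rw [hcardF]
  rcases B.eq_empty_or_nonempty with hBe | hBne
  · have hGe : G = ∅ := Finset.image_eq_empty.mp hBe
    have : F.card = Fs.card := by rw [← hsplit, hGe]; simp
    rw [this]
    have : (Fs.card : ℝ) ≤ (D₁ : ℝ) := by exact_mod_cast hsmall
    linarith
  · have hlowB : ∀ t ∈ B, (2:ℝ) ≤ t := by
      intro t ht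
      rw [hBdef, Finset.mem_image] at ht
      obtain ⟨n, hn, rfl⟩ := ht
      linarith [(hmemG n hn).2]
    have hgapB : ∀ t ∈ B, ∀ t' ∈ B, t < t' → t ^ 2 ≤ t' := by
      intro t ht t' ht' hlt'
      rw [hBdef, Finset.mem_image] at ht ht'
      obtain ⟨n, hn, rfl⟩ := ht
      obtain ⟨n', hn', rfl⟩ := ht'
      exact hsq n n' (hmemG n hn).1 (hmemG n' hn').1 (hmemG n hn).2 hlt'
    have hupB : ∀ t ∈ B, t ≤ M := by
      intro t ht
      rw [hBdef, Finset.mem_image] at ht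
      obtain ⟨n, hn, rfl⟩ := ht
      exact hupM n (hmemG n hn).1
    have hle2M := RL.count B.card B 2 M rfl (le_refl 2) hlowB hgapB hupB hBne
    set k := B.card - 1 with hkdef
    have hBk : B.card = k + 1 := by
      have := Finset.card_pos.mpr hBne
      omega
    have s1' : Real.logb 2 ((2:ℝ) ^ (2^k : ℕ)) ≤ Real.logb 2 M :=
      Real.logb_le_logb_of_le one_lt_two (by positivity) hle2M
    rw [Real.logb_pow, Real.logb_self_eq_one one_lt_two, mul_one] at s1'
    have s1'' : (2:ℝ)^(k:ℕ) ≤ Real.logb 2 M := by push_cast at s1'; exact s1'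
    have s2' : Real.logb 2 ((2:ℝ) ^ (k:ℕ)) ≤ Real.logb 2 (Real.logb 2 M) :=
      Real.logb_le_logb_of_le one_lt_two (by positivity) s1''
    rw [Real.logb_pow, Real.logb_self_eq_one one_lt_two, mul_one] at s2'
    have hC₆pos : (0:ℝ) < C₆ := by linarith
    have hypos : (0:ℝ) < y := by linarith
    have s3 : Real.logb 2 M = Real.logb 2 C₆ + x := by
      rw [hMdef, Real.logb_mul hC₆pos.ne' hypos.ne', ← hxdef]
    have s4 : Real.logb 2 (Real.logb 2 M) ≤ Real.logb 2 (Real.logb 2 C₆) + x + 1 := by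
      rw [s3]; exact RL.logb_add_le hA1 hx0
    have hcards : (F.card : ℝ) = (B.card : ℝ) + (Fs.card : ℝ) := by
      rw [← hsplit, ← hGB]; push_cast; ring
    have hsm : (Fs.card : ℝ) ≤ (D₁ : ℝ) := by exact_mod_cast hsmall
    have hBcard : (B.card : ℝ) = (k:ℝ) + 1 := by rw [hBk]; push_cast; ring
    rw [hcards]
    linarith [s2', s4]
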